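/- arXiv:1606.00399 — 8 statements merged into one kernel-verified Lean document; each statement's English description precedes it below -/
import Mathlib

section
/- Let V be a finite set and f : 2^V → ℝ a submodular set function. Let S ⊆ V and let u, v ∈ V with u ∉ S, v ∉ S and u ≠ v. Then f(v|S) ≤ f(u|S) + w_{uv|S}. -/
open Finset

variable {α : Type*}

/-- `f` is submodular on subsets of the ground set `V`. -/
def Submod [DecidableEq α] (V : Finset α) (f : Finset α → ℝ) : Prop :=
  ∀ A B : Finset α, A ⊆ B → B ⊆ V → ∀ v ∈ V, v ∉ B →
    f (insert v B) - f B ≤ f (insert v A) - f A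

/-- Marginal gain `f(v|S) = f(S ∪ {v}) - f(S)`. -/
def gain [DecidableEq α] (f : Finset α → ℝ) (v : α) (S : Finset α) : ℝ :=
  f (insert v S) - f S

/-- Submodularity-graph edge weight `w_{uv} = f(v|u) - f(u|V∖u)`. -/
def w [DecidableEq α] (f : Finset α → ℝ) (V : Finset α) (u v : α) : ℝ :=
  gain f v {u} - gain f u (V.erase u)

/-- Conditional edge weight `w_{uv|S} = f(v|S ∪ {u}) - f(u|V∖u)`. -/
def wS [DecidableEq α] (f : Finset α → ℝ) (V S : Finset α) (u v : α) : ℝ :=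
  gain f v (insert u S) - gain f u (V.erase u)

theorem stmt_1 [DecidableEq α] (V : Finset α) (f : Finset α → ℝ)
    (hsub : Submod V f)
    (S : Finset α) (hSV : S ⊆ V)
    (u v : α) (hu : u ∈ V) (hv : v ∈ V)
    (huS : u ∉ S) (hvS : v ∉ S) (huv : u ≠ v) :
    gain f v S ≤ gain f u S + wS f V S u v := by
  have hA : insert v S ⊆ V.erase u := by
    intro x hx
    rcases Finset.mem_insert.mp hx with h | h
    · subst h; exact Finset.mem_erase.mpr ⟨huv.symm, hv⟩
    · exact Finset.mem_erase.mpr ⟨fun e => huS (e ▸ h), hSV h⟩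
  have h := hsub (insert v S) (V.erase u) hA (Finset.erase_subset _ _) u hu
    (Finset.notMem_erase _ _)
  simp only [gain, wS]
  rw [Finset.insert_comm] at h
  linarith
end

section
/- Let V be a finite set and f : 2^V → ℝ a submodular set function. Let S ⊆ V, let V' ⊆ V be nonempty with V' ∩ S = ∅, and let u ∈ V' satisfy f(u|S) ≥ f(x|S) for all x ∈ V'. Then for every v ∈ V∖(S∪V'), f(u|S) ≥ f(v|S) − min_{x∈V'} w_{xv|S}. In other words, the loss in the per-step greedy gain caused by v being missing from V' is at most the divergence of v from V'. -/
open Finset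

variable {α : Type*}

theorem stmt_2 [DecidableEq α] (V : Finset α) (f : Finset α → ℝ)
    (hsub : Submod V f)
    (S : Finset α) (hSV : S ⊆ V)
    (V' : Finset α) (hV'V : V' ⊆ V) (hne : V'.Nonempty) (hdisj : V' ∩ S = ∅)
    (u : α) (huV' : u ∈ V') (humax : ∀ x ∈ V', gain f x S ≤ gain f u S) :
    ∀ v ∈ V \ (S ∪ V'),
      gain f u S ≥ gain f v S - V'.inf' hne (fun x => wS f V S x v) := by
  intro v hv
  have huV : u ∈ V := hV'V huV'
  have huS : u ∉ S := by
    intro h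
    have : u ∈ V' ∩ S := Finset.mem_inter.2 ⟨huV', h⟩
    simp [hdisj] at this
  obtain ⟨hvV, hvns⟩ := Finset.mem_sdiff.1 hv
  rw [Finset.mem_union] at hvns
  push_neg at hvns
  have hvS : v ∉ S := hvns.1
  have hvu : v ≠ u := fun h => hvns.2 (h ▸ huV')
  rw [ge_iff_le, sub_le_iff_le_add, add_comm, ← sub_le_iff_le_add]
  apply Finset.le_inf'
  intro x hxV'
  have hxV : x ∈ V := hV'V hxV'
  have hxS : x ∉ S := by
    intro h
    have : x ∈ V' ∩ S := Finset.mem_inter.2 ⟨hxV', h⟩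
    simp [hdisj] at this
  have hvx : v ≠ x := fun h => hvns.2 (h ▸ hxV')
  have hAB : insert v S ⊆ V.erase x := by
    intro y hy
    rcases Finset.mem_insert.1 hy with h | h
    · subst h; exact Finset.mem_erase.2 ⟨hvx, hvV⟩
    · exact Finset.mem_erase.2 ⟨fun he => hxS (he ▸ h), hSV h⟩
  have hkey := hsub (insert v S) (V.erase x) hAB (Finset.erase_subset _ _) x hxV
    (Finset.notMem_erase _ _)
  have hmax := humax x hxV'
  rw [Finset.insert_comm x v S] at hkey
  simp only [wS, gain] at *
  linarith
end

section
/- (Directed triangle inequality on the submodularity graph.) Let V be a finite set and f : 2^V → ℝ a submodular set function. Then for all pairwise distinct u, v, x ∈ V, w_{vx} ≤ w_{vu} + w_{ux}. -/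
open Finset

variable {α : Type*}

theorem stmt_3 [DecidableEq α] (V : Finset α) (f : Finset α → ℝ)
    (hsub : Submod V f)
    (u v x : α) (hu : u ∈ V) (hv : v ∈ V) (hx : x ∈ V)
    (huv : u ≠ v) (hux : u ≠ x) (hvx : v ≠ x) :
    w f V v x ≤ w f V v u + w f V u x := by
  have h1 := hsub ({u} : Finset α) (insert u {v}) (by simp)
    (by intro a ha; simp at ha; rcases ha with rfl | rfl <;> assumption) x hx
    (by simp [hux.symm, hvx.symm, Ne.symm])
  have h2 := hsub (insert v {x}) (V.erase u)
    (by intro a ha; simp at ha; rcases ha with rfl | rfl <;>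
      simp [Finset.mem_erase, huv.symm, hux.symm, Ne.symm, hv, hx])
    (Finset.erase_subset u V) u hu (Finset.notMem_erase u V)
  have e1 : (insert x (insert u {v}) : Finset α) = insert u (insert v {x}) := by
    ext a; simp; tauto
  have e2 : (insert v {x} : Finset α) = insert x {v} := by
    ext a; simp; tauto
  rw [e1] at h1
  have e3 : ({u, x, v} : Finset α) = {u, v, x} := by ext a; simp; tauto
  rw [e2, e3] at h2
  simp only [w, gain, wS] at *
  linarith
end

section
/- Let V be a finite set, f : 2^V → ℝ a monotone submodular set function, and ε ≥ 0. Define h : 2^V → ℝ by h(V') := |{v ∈ V∖V' : there exists x ∈ V' with w_{xv} ≤ ε}|. Then h is submodular: for all A ⊆ B ⊆ V and all u ∈ V∖B, h(A∪{u}) − h(A) ≥ h(B∪{u}) − h(B). -/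
open Finset

variable {α : Type*}

open Classical in
/-- `h(V') = |{v ∈ V∖V' : ∃ x ∈ V', w_{xv} ≤ ε}|`. -/
noncomputable def hfun [DecidableEq α] (f : Finset α → ℝ) (V : Finset α) (ε : ℝ)
    (V' : Finset α) : ℝ :=
  (((V \ V').filter (fun v => ∃ x ∈ V', w f V x v ≤ ε)).card : ℝ)

open Classical in
noncomputable def Pset [DecidableEq α] (f : Finset α → ℝ) (V : Finset α) (ε : ℝ)
    (V' : Finset α) : Finset α :=
  (V \ V').filter (fun v => ∃ x ∈ V', w f V x v ≤ ε)

noncomputable def Qset [DecidableEq α] (f : Finset α → ℝ) (V : Finset α) (ε : ℝ)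
    (V' : Finset α) : Finset α :=
  V' ∪ Pset f V ε V'

open Classical in
noncomputable def Nset [DecidableEq α] (f : Finset α → ℝ) (V : Finset α) (ε : ℝ)
    (u : α) : Finset α :=
  V.filter (fun v => w f V u v ≤ ε)

lemma hfun_eq [DecidableEq α] (f : Finset α → ℝ) (V : Finset α) (ε : ℝ) (V' : Finset α) :
    hfun f V ε V' = ((Pset f V ε V').card : ℝ) := rfl

lemma Pset_sub [DecidableEq α] (f : Finset α → ℝ) (V : Finset α) (ε : ℝ) (V' : Finset α) :
    Pset f V ε V' ⊆ V \ V' := filter_subset _ _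

lemma Qset_insert [DecidableEq α] (f : Finset α → ℝ) (V : Finset α) (ε : ℝ)
    (V' : Finset α) (u : α) (huV : u ∈ V) (huu : w f V u u ≤ ε) :
    Qset f V ε (insert u V') = Qset f V ε V' ∪ Nset f V ε u := by
  ext v
  simp only [Qset, Pset, Nset, mem_union, mem_filter, mem_sdiff, mem_insert]
  constructor
  · rintro ((rfl | hv) | ⟨⟨hvV, hvni⟩, x, (rfl | hx), hw⟩)
    · exact Or.inr ⟨huV, huu⟩
    · exact Or.inl (Or.inl hv)
    · exact Or.inr ⟨hvV, hw⟩
    · push_neg at hvni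
      exact Or.inl (Or.inr ⟨⟨hvV, hvni.2⟩, x, hx, hw⟩)
  · rintro ((hv | ⟨⟨hvV, hvn⟩, x, hx, hw⟩) | ⟨hvV, hw⟩)
    · exact Or.inl (Or.inr hv)
    · by_cases h : v = u
      · exact Or.inl (Or.inl h)
      · exact Or.inr ⟨⟨hvV, by simp [h, hvn]⟩, x, Or.inr hx, hw⟩
    · by_cases h : v = u ∨ v ∈ V'
      · exact Or.inl h
      · push_neg at h
        exact Or.inr ⟨⟨hvV, by simp [h.1, h.2]⟩, u, Or.inl rfl, hw⟩

lemma Qset_mono [DecidableEq α] (f : Finset α → ℝ) (V : Finset α) (ε : ℝ)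
    {A B : Finset α} (hAB : A ⊆ B) : Qset f V ε A ⊆ Qset f V ε B := by
  intro v hv
  simp only [Qset, Pset, mem_union, mem_filter, mem_sdiff] at hv ⊢
  rcases hv with hv | ⟨⟨hvV, hvA⟩, x, hx, hw⟩
  · exact Or.inl (hAB hv)
  · by_cases h : v ∈ B
    · exact Or.inl h
    · exact Or.inr ⟨⟨hvV, h⟩, x, hAB hx, hw⟩

lemma card_Qset [DecidableEq α] (f : Finset α → ℝ) (V : Finset α) (ε : ℝ) (V' : Finset α) :
    (Qset f V ε V').card = V'.card + (Pset f V ε V').card := by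
  refine card_union_of_disjoint ?_
  exact Finset.disjoint_left.mpr fun v hv hv' =>
    (mem_sdiff.mp (Pset_sub f V ε V' hv')).2 hv

lemma wuu_le [DecidableEq α] (f : Finset α → ℝ) (V : Finset α)
    (hmono : ∀ A B : Finset α, A ⊆ B → B ⊆ V → f A ≤ f B)
    {ε : ℝ} (hε : 0 ≤ ε) {u : α} (huV : u ∈ V) : w f V u u ≤ ε := by
  have h1 : insert u ({u} : Finset α) = {u} := by simp
  have h2 : insert u (V.erase u) = V := insert_erase huV
  have h3 : f (V.erase u) ≤ f V := hmono _ _ (erase_subset _ _) le_rfl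
  simp only [w, gain, h1, h2]
  linarith

theorem stmt_5 [DecidableEq α] (V : Finset α) (f : Finset α → ℝ)
    (hsub : Submod V f) (hmono : ∀ A B : Finset α, A ⊆ B → B ⊆ V → f A ≤ f B)
    (ε : ℝ) (hε : 0 ≤ ε) :
    ∀ A B : Finset α, A ⊆ B → B ⊆ V → ∀ u ∈ V, u ∉ B →
      hfun f V ε (insert u B) - hfun f V ε B ≤
        hfun f V ε (insert u A) - hfun f V ε A := by
  intro A B hAB hBV u huV huB
  have huA : u ∉ A := fun h => huB (hAB h)
  have huu := wuu_le f V hmono hε huV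
  have key : ∀ V' : Finset α, u ∉ V' →
      ((Pset f V ε (insert u V')).card : ℝ) - (Pset f V ε V').card
        = ((Nset f V ε u \ Qset f V ε V').card : ℝ) - 1 := by
    intro V' huV'
    have h1 : (Qset f V ε (insert u V')).card
        = (Qset f V ε V' ∪ Nset f V ε u).card := by
      rw [Qset_insert f V ε V' u huV huu]
    have h2 : (Qset f V ε V' ∪ Nset f V ε u).card
        = (Nset f V ε u \ Qset f V ε V').card + (Qset f V ε V').card := by
      rw [union_comm]; exact (card_sdiff_add_card _ _).symm
    have h3 := card_Qset f V ε (insert u V')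
    have h4 := card_Qset f V ε V'
    have h5 : (insert u V').card = V'.card + 1 := card_insert_of_notMem huV'
    have : V'.card + 1 + (Pset f V ε (insert u V')).card
        = (Nset f V ε u \ Qset f V ε V').card + (V'.card + (Pset f V ε V').card) := by
      rw [← h5, ← h3, ← h4, h1, h2]
    have h6 := congrArg (Nat.cast : ℕ → ℝ) this
    push_cast at h6
    linarith
  rw [hfun_eq, hfun_eq, hfun_eq, hfun_eq, key B huB, key A huA]
  have hsub2 : Nset f V ε u \ Qset f V ε B ⊆ Nset f V ε u \ Qset f V ε A :=
    sdiff_subset_sdiff (Subset.refl _) (Qset_mono f V ε hAB)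
  have hc : ((Nset f V ε u \ Qset f V ε B).card : ℝ)
      ≤ (Nset f V ε u \ Qset f V ε A).card := Nat.cast_le.mpr (card_le_card hsub2)
  linarith
end

section
/- (Performance of greedy on a sparsified ground set.) Let V be a finite set and f : 2^V → ℝ a normalized, monotone, submodular set function. Let k ≥ 1, ε ≥ 0, let S* ⊆ V with |S*| ≤ k, and let V* ⊆ V with |V*| ≥ k. Let S_0 = ∅, S_1, …, S_k ⊆ V* be a greedy sequence in V*: for each i < k there is u_i ∈ V*∖S_i with S_{i+1} = S_i∪{u_i} and f(u_i|S_i) ≥ f(x|S_i) for all x ∈ V*∖S_i. Assume that for each i < k and each v ∈ V∖(V*∪S_i) there exists x ∈ V*∖S_i with w_{xv} ≤ ε. Then f(S_k) ≥ (1 − e^{−1})·(f(S*) − kε). -/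
open Finset

variable {α : Type*}

section helpers

variable [DecidableEq α] {V : Finset α} {f : Finset α → ℝ}

lemma gain_nonneg (hmono : ∀ A B : Finset α, A ⊆ B → B ⊆ V → f A ≤ f B)
    {S : Finset α} (hS : S ⊆ V) {v : α} (hv : v ∈ V) : 0 ≤ gain f v S := by
  have := hmono S (insert v S) (subset_insert _ _) (insert_subset hv hS)
  simp only [gain]
  linarith

lemma exchange (hsub : Submod V f) {S : Finset α} (hS : S ⊆ V)
    {u v : α} (hu : u ∈ V) (hv : v ∈ V) (huS : u ∉ S) (hvS : v ∉ S) (huv : u ≠ v) :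
    gain f v S ≤ gain f u S + w f V u v := by
  have h1 : gain f v (insert u S) ≤ gain f v {u} := by
    have := hsub {u} (insert u S) (by simp) (insert_subset hu hS) v hv
      (by
        intro hmem
        rcases mem_insert.1 hmem with h | h
        · exact huv h.symm
        · exact hvS h)
    simpa [gain] using this
  have h2 : gain f u (V.erase u) ≤ gain f u (insert v S) := by
    have := hsub (insert v S) (V.erase u)
      (insert_subset (mem_erase.2 ⟨fun h => huv h.symm, hv⟩)
        (fun x hx => mem_erase.2 ⟨fun h => huS (h ▸ hx), hS hx⟩))
      (erase_subset _ _) u hu (notMem_erase _ _)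
    simpa [gain] using this
  have hkey : gain f v S + gain f u (insert v S) = gain f u S + gain f v (insert u S) := by
    simp only [gain]
    rw [Finset.insert_comm]
    ring
  simp only [w]
  linarith

lemma sum_gain_bound (hsub : Submod V f)
    (hmono : ∀ A B : Finset α, A ⊆ B → B ⊆ V → f A ≤ f B)
    {S : Finset α} (hS : S ⊆ V) (T : Finset α) (hT : T ⊆ V) :
    f (S ∪ T) ≤ f S + ∑ v ∈ T, gain f v S := by
  induction T using Finset.induction_on with
  | empty => simp
  | @insert a T' ha ih =>
    have haV : a ∈ V := hT (mem_insert_self _ _)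
    have hT'V : T' ⊆ V := (subset_insert _ _).trans hT
    have hrw : S ∪ insert a T' = insert a (S ∪ T') := by
      ext x; simp [or_comm, or_left_comm, or_assoc]
    rw [hrw, Finset.sum_insert ha]
    by_cases hmem : a ∈ S ∪ T'
    · rw [Finset.insert_eq_self.2 hmem]
      have h0 : 0 ≤ gain f a S := gain_nonneg hmono hS haV
      have := ih hT'V
      linarith
    · have hsm := hsub S (S ∪ T') Finset.subset_union_left
        (Finset.union_subset hS hT'V) a haV hmem
      have hgdef : gain f a S = f (insert a S) - f S := rfl
      have := ih hT'V
      linarith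

end helpers

theorem stmt_8 [DecidableEq α] (V : Finset α) (f : Finset α → ℝ)
    (hsub : Submod V f) (hmono : ∀ A B : Finset α, A ⊆ B → B ⊆ V → f A ≤ f B)
    (hnorm : f ∅ = 0)
    (k : ℕ) (hk : 1 ≤ k) (ε : ℝ) (hε : 0 ≤ ε)
    (Sstar : Finset α) (hSstarV : Sstar ⊆ V) (hSstarcard : Sstar.card ≤ k)
    (Vstar : Finset α) (hVstarV : Vstar ⊆ V) (hVstarcard : k ≤ Vstar.card)
    (S : ℕ → Finset α) (u : ℕ → α)
    (hS0 : S 0 = ∅) (hSsub : ∀ i ≤ k, S i ⊆ Vstar)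
    (hgreedy : ∀ i < k, u i ∈ Vstar \ S i ∧ S (i + 1) = insert (u i) (S i) ∧
      ∀ x ∈ Vstar \ S i, gain f x (S i) ≤ gain f (u i) (S i))
    (hcover : ∀ i < k, ∀ v ∈ V \ (Vstar ∪ S i), ∃ x ∈ Vstar \ S i, w f V x v ≤ ε) :
    f (S k) ≥ (1 - Real.exp (-1)) * (f Sstar - (k : ℝ) * ε) := by
  have hkR : (1 : ℝ) ≤ (k : ℝ) := by exact_mod_cast hk
  have hkpos : (0 : ℝ) < (k : ℝ) := by linarith
  have hk0 : (k : ℝ) ≠ 0 := ne_of_gt hkpos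
  set δ : ℕ → ℝ := fun i => gain f (u i) (S i) with hδ
  -- per-step bound
  have hstep : ∀ i < k, f Sstar - (k : ℝ) * ε ≤ f (S i) + (k : ℝ) * δ i := by
    intro i hi
    have hSiV : S i ⊆ V := (hSsub i hi.le).trans hVstarV
    obtain ⟨huiV, hSsucc, hmax⟩ := hgreedy i hi
    have hδnn : 0 ≤ δ i :=
      gain_nonneg hmono hSiV (hVstarV (mem_sdiff.1 huiV).1)
    -- each element of Sstar has gain at most δ i + ε
    have helem : ∀ v ∈ Sstar, gain f v (S i) ≤ δ i + ε := by
      intro v hv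
      by_cases hvS : v ∈ S i
      · have : insert v (S i) = S i := Finset.insert_eq_self.2 hvS
        simp only [gain, this]
        linarith
      by_cases hvV : v ∈ Vstar
      · have := hmax v (mem_sdiff.2 ⟨hvV, hvS⟩)
        linarith
      · have hvcov : v ∈ V \ (Vstar ∪ S i) := by
          simp [mem_sdiff, hSstarV hv, hvV, hvS]
        obtain ⟨x, hx, hwx⟩ := hcover i hi v hvcov
        obtain ⟨hxV, hxS⟩ := mem_sdiff.1 hx
        have hxv : x ≠ v := fun h => hvV (h ▸ hxV)
        have hex := exchange hsub hSiV (hVstarV hxV) (hSstarV hv) hxS hvS hxv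
        have := hmax x hx
        linarith
    have hsum : ∑ v ∈ Sstar, gain f v (S i) ≤ (Sstar.card : ℝ) * (δ i + ε) := by
      have := Finset.sum_le_card_nsmul Sstar (fun v => gain f v (S i)) (δ i + ε) helem
      simpa [nsmul_eq_mul, mul_add] using this
    have hcard : (Sstar.card : ℝ) * (δ i + ε) ≤ (k : ℝ) * (δ i + ε) := by
      apply mul_le_mul_of_nonneg_right _ (by linarith)
      exact_mod_cast hSstarcard
    have hm1 : f Sstar ≤ f (Sstar ∪ S i) :=
      hmono Sstar (Sstar ∪ S i) Finset.subset_union_left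
        (Finset.union_subset hSstarV hSiV)
    have hm2 : f (S i ∪ Sstar) ≤ f (S i) + ∑ v ∈ Sstar, gain f v (S i) :=
      sum_gain_bound hsub hmono hSiV Sstar hSstarV
    rw [Finset.union_comm] at hm2
    have hkε : (k : ℝ) * (δ i + ε) = (k : ℝ) * δ i + (k : ℝ) * ε := by ring
    linarith
  -- the gap sequence
  set g : ℕ → ℝ := fun i => f Sstar - (k : ℝ) * ε - f (S i) with hg
  have hrec : ∀ i < k, g (i + 1) ≤ (1 - 1 / (k : ℝ)) * g i := by
    intro i hi
    obtain ⟨huiV, hSsucc, hmax⟩ := hgreedy i hi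
    have hδeq : f (S (i + 1)) = f (S i) + δ i := by
      rw [hSsucc]; simp only [hδ, gain]; ring
    have hgi : g i ≤ (k : ℝ) * δ i := by
      have := hstep i hi
      simp only [hg]; linarith
    have hgexp : g (i + 1) = g i - δ i := by simp only [hg, hδeq]; ring
    rw [hgexp]
    have hq : g i / (k : ℝ) ≤ δ i := by rw [div_le_iff₀ hkpos]; linarith
    have hid : (1 - 1 / (k : ℝ)) * g i = g i - g i / (k : ℝ) := by ring
    linarith
  have hiter : ∀ i ≤ k, g i ≤ (1 - 1 / (k : ℝ)) ^ i * g 0 := by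
    intro i
    induction i with
    | zero => simp
    | succ n ihn =>
      intro hn
      have hnk : n < k := hn
      have hfac : (0 : ℝ) ≤ 1 - 1 / (k : ℝ) := by
        have : 1 / (k : ℝ) ≤ 1 := by
          rw [div_le_one hkpos]; exact hkR
        linarith
      calc g (n + 1) ≤ (1 - 1 / (k : ℝ)) * g n := hrec n hnk
        _ ≤ (1 - 1 / (k : ℝ)) * ((1 - 1 / (k : ℝ)) ^ n * g 0) :=
            mul_le_mul_of_nonneg_left (ihn hnk.le) hfac
        _ = (1 - 1 / (k : ℝ)) ^ (n + 1) * g 0 := by ring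
  have hg0 : g 0 = f Sstar - (k : ℝ) * ε := by
    simp [hg, hS0, hnorm]
  have hexp : (1 - 1 / (k : ℝ)) ^ k ≤ Real.exp (-1) := by
    have h1 : 1 - 1 / (k : ℝ) ≤ Real.exp (-(1 / (k : ℝ))) := by
      have := Real.add_one_le_exp (-(1 / (k : ℝ)))
      linarith
    have hfac : (0 : ℝ) ≤ 1 - 1 / (k : ℝ) := by
      have : 1 / (k : ℝ) ≤ 1 := by rw [div_le_one hkpos]; exact hkR
      linarith
    calc (1 - 1 / (k : ℝ)) ^ k ≤ (Real.exp (-(1 / (k : ℝ)))) ^ k :=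
          pow_le_pow_left₀ hfac h1 k
      _ = Real.exp ((k : ℝ) * (-(1 / (k : ℝ)))) := by
          rw [← Real.exp_nat_mul]
      _ = Real.exp (-1) := by
          rw [show (k : ℝ) * -(1 / (k : ℝ)) = -1 by rw [mul_neg, mul_one_div, div_self hk0]]
  have hgk := hiter k le_rfl
  have hSkf : f (S k) = f Sstar - (k : ℝ) * ε - g k := by simp [hg]
  by_cases hpos : 0 ≤ f Sstar - (k : ℝ) * ε
  · have : (1 - 1 / (k : ℝ)) ^ k * g 0 ≤ Real.exp (-1) * g 0 := by
      rw [hg0]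
      exact mul_le_mul_of_nonneg_right hexp hpos
    rw [hg0] at this
    have hgk2 : g k ≤ Real.exp (-1) * (f Sstar - (k : ℝ) * ε) := by
      calc g k ≤ (1 - 1 / (k : ℝ)) ^ k * g 0 := hgk
        _ ≤ Real.exp (-1) * (f Sstar - (k : ℝ) * ε) := by rw [hg0]; exact this
    rw [ge_iff_le, hSkf]
    nlinarith [hgk2]
  · push_neg at hpos
    have hSk0 : 0 ≤ f (S k) := by
      have := hmono ∅ (S k) (Finset.empty_subset _) ((hSsub k le_rfl).trans hVstarV)
      linarith [this, hnorm.le]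
    have he1 : Real.exp (-1) ≤ 1 := by
      calc Real.exp (-1) ≤ Real.exp 0 := Real.exp_le_exp.2 (by norm_num)
        _ = 1 := Real.exp_zero
    have : (1 - Real.exp (-1)) * (f Sstar - (k : ℝ) * ε) ≤ 0 :=
      mul_nonpos_of_nonneg_of_nonpos (by linarith) hpos.le
    linarith
end

section
/- Let V be a finite set and f : 2^V → ℝ a submodular set function. Let u, u*, v ∈ V be pairwise distinct. If f({u,u*}) ≤ f({v,u*}) and f({u}) + f(u|V∖{u}) ≥ f({u*}) + f(u*|V∖{u*}), then w_{uv} ≤ 2·w_{u*v}. -/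
open Finset

variable {α : Type*}

theorem stmt_11 [DecidableEq α] (V : Finset α) (f : Finset α → ℝ)
    (hsub : Submod V f)
    (u ustar v : α) (hu : u ∈ V) (hustar : ustar ∈ V) (hv : v ∈ V)
    (h1 : u ≠ ustar) (h2 : u ≠ v) (h3 : ustar ≠ v)
    (hP : f {u, ustar} ≤ f {v, ustar})
    (hQ : f {ustar} + gain f ustar (V.erase ustar) ≤ f {u} + gain f u (V.erase u)) :
    w f V u v ≤ 2 * w f V ustar v := by
  have hA : f (insert v (insert u {ustar})) - f (insert u {ustar}) ≤
      f (insert v {ustar}) - f {ustar} := by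
    apply hsub {ustar} (insert u {ustar}) (Finset.subset_insert _ _) _ v hv
    · simp [h2.symm, h3.symm]
    · intro x hx
      simp only [Finset.mem_insert, Finset.mem_singleton] at hx
      rcases hx with rfl | rfl <;> assumption
  have hB : f (insert ustar (V.erase ustar)) - f (V.erase ustar) ≤
      f (insert ustar {u, v}) - f {u, v} := by
    apply hsub {u, v} (V.erase ustar) _ (Finset.erase_subset _ _) ustar hustar
      (Finset.notMem_erase _ _)
    intro x hx
    simp only [Finset.mem_insert, Finset.mem_singleton] at hx
    rcases hx with rfl | rfl <;> simp [Finset.mem_erase, h1, h3.symm, hu, hv]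
  have heq : insert ustar ({u, v} : Finset α) = insert v (insert u {ustar}) := by
    ext x; simp; tauto
  have hpair : ({u, v} : Finset α) = insert v {u} := by
    ext x; simp; tauto
  rw [heq, hpair] at hB
  simp only [w, gain] at *
  linarith
end

section
/- (Elements outside a nearest-neighbor ball of a probe are safely ruled out.) Let V be a finite set and f : 2^V → ℝ a submodular set function. Let u* ∈ V and let B ⊆ V satisfy f({b,u*}) ≤ f({s,u*}) for every b ∈ B and every s ∈ V∖B (i.e., B consists of elements with the smallest values of f({·}∪{u*})). Let u ∈ B with u ≠ u* satisfy f({u}) + f(u|V∖{u}) ≥ f({u*}) + f(u*|V∖{u*}). Then for every v ∈ V∖B with v ≠ u and v ≠ u*, w_{uv} ≤ 2·w_{u*v}. -/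
open Finset

variable {α : Type*}

theorem stmt_12 [DecidableEq α] (V : Finset α) (f : Finset α → ℝ)
    (hsub : Submod V f)
    (ustar : α) (hustar : ustar ∈ V)
    (B : Finset α) (hBV : B ⊆ V)
    (hball : ∀ b ∈ B, ∀ s ∈ V \ B, f {b, ustar} ≤ f {s, ustar})
    (u : α) (huB : u ∈ B) (hune : u ≠ ustar)
    (hQ : f {ustar} + gain f ustar (V.erase ustar) ≤ f {u} + gain f u (V.erase u)) :
    ∀ v ∈ V \ B, v ≠ u → v ≠ ustar → w f V u v ≤ 2 * w f V ustar v := by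
  intro v hv hvu hvustar
  have hvV : v ∈ V := (mem_sdiff.mp hv).1
  have huV : u ∈ V := hBV huB
  have H2 : f {u, ustar} ≤ f {v, ustar} := hball u huB v hv
  have hvpair : v ∉ ({u, ustar} : Finset α) := by simp [hvu, hvustar]
  have hpairV : ({u, ustar} : Finset α) ⊆ V := by
    intro x hx
    simp only [mem_insert, mem_singleton] at hx
    rcases hx with h | h <;> simp [h, huV, hustar]
  have S4 : f (insert v {u, ustar}) - f {u, ustar} ≤ f (insert v {ustar}) - f {ustar} :=
    hsub {ustar} {u, ustar} (by simp) hpairV v hvV hvpair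
  have hsubuv : ({u, v} : Finset α) ⊆ V.erase ustar := by
    intro x hx
    simp only [mem_insert, mem_singleton] at hx
    rcases hx with h | h
    · subst h; exact mem_erase.mpr ⟨hune, huV⟩
    · subst h; exact mem_erase.mpr ⟨hvustar, hvV⟩
  have S9 : f (insert ustar (V.erase ustar)) - f (V.erase ustar)
      ≤ f (insert ustar {u, v}) - f {u, v} :=
    hsub {u, v} (V.erase ustar) hsubuv (erase_subset _ _) ustar hustar (notMem_erase _ _)
  have hset1 : insert ustar ({u, v} : Finset α) = insert v {u, ustar} := by
    ext x; simp only [mem_insert, mem_singleton]; tauto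
  have hset3 : insert v ({u} : Finset α) = ({u, v} : Finset α) := by
    ext x; simp only [mem_insert, mem_singleton]; tauto
  rw [hset1] at S9
  simp only [w, gain] at *
  rw [hset3]
  linarith
end

section
/- (Bound on the number of elements whose divergence from the probes is not controlled.) Let V be a finite set, f : 2^V → ℝ a submodular set function, V* ⊆ V nonempty, U ⊆ V nonempty, and m a nonnegative integer. Suppose that for each u* ∈ V* there is a set B(u*) ⊆ V with |B(u*)| ≤ m such that f({b,u*}) ≤ f({s,u*}) for every b ∈ B(u*) and s ∈ V∖B(u*), and there exists u ∈ U ∩ B(u*) with u ≠ u* and f({u}) + f(u|V∖{u}) ≥ f({u*}) + f(u*|V∖{u*}). Then {x ∈ V∖(V*∪U) : min_{u∈U} w_{ux} > 2·min_{y∈V*} w_{yx}} ⊆ ⋃_{u*∈V*} B(u*), and in particular |{x ∈ V∖(V*∪U) : min_{u∈U} w_{ux} > 2·min_{y∈V*} w_{yx}}| ≤ |V*|·m. -/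
open Finset

variable {α : Type*}

theorem stmt_13 [DecidableEq α] (V : Finset α) (f : Finset α → ℝ)
    (hsub : Submod V f)
    (Vstar : Finset α) (hVstarV : Vstar ⊆ V) (hVstar : Vstar.Nonempty)
    (U : Finset α) (hUV : U ⊆ V) (hU : U.Nonempty)
    (m : ℕ) (B : α → Finset α)
    (hB : ∀ ustar ∈ Vstar, B ustar ⊆ V ∧ (B ustar).card ≤ m ∧
      (∀ b ∈ B ustar, ∀ s ∈ V \ B ustar, f {b, ustar} ≤ f {s, ustar}) ∧
      ∃ u ∈ U ∩ B ustar, u ≠ ustar ∧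
        f {ustar} + gain f ustar (V.erase ustar) ≤ f {u} + gain f u (V.erase u)) :
    ((V \ (Vstar ∪ U)).filter
        (fun x => 2 * Vstar.inf' hVstar (fun y => w f V y x) <
          U.inf' hU (fun u => w f V u x))) ⊆ Vstar.biUnion B ∧
    ((V \ (Vstar ∪ U)).filter
        (fun x => 2 * Vstar.inf' hVstar (fun y => w f V y x) <
          U.inf' hU (fun u => w f V u x))).card ≤ Vstar.card * m := by
  have hmain : ((V \ (Vstar ∪ U)).filter
        (fun x => 2 * Vstar.inf' hVstar (fun y => w f V y x) <
          U.inf' hU (fun u => w f V u x))) ⊆ Vstar.biUnion B := by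
    intro x hx
    simp only [mem_filter, mem_sdiff, mem_union, not_or] at hx
    obtain ⟨⟨hxV, hxVs, hxU⟩, hlt⟩ := hx
    obtain ⟨q, hqVs, hq⟩ := Finset.exists_mem_eq_inf' hVstar (fun y => w f V y x)
    obtain ⟨hBV, hBm, hcomp, u, huUB, hune, hgain⟩ := hB q hqVs
    rw [Finset.mem_inter] at huUB
    obtain ⟨huU, huB⟩ := huUB
    rw [mem_biUnion]
    refine ⟨q, hqVs, ?_⟩
    by_contra hxB
    have hqV := hVstarV hqVs
    have huV := hUV huU
    have hxq : x ≠ q := fun h => hxVs (h ▸ hqVs)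
    have hxu : x ≠ u := fun h => hxU (h ▸ huU)
    have h1 : f {u, q} ≤ f {x, q} := hcomp u huB x (by simp [mem_sdiff, hxV, hxB])
    have h2 : gain f q (V.erase q) ≤ gain f q {u, x} := by
      apply hsub {u, x} (V.erase q) ?_ (erase_subset _ _) q hqV (notMem_erase _ _)
      intro a ha
      simp only [mem_insert, mem_singleton] at ha
      rcases ha with rfl | rfl
      · exact mem_erase.2 ⟨hune, huV⟩
      · exact mem_erase.2 ⟨hxq, hxV⟩
    have h3 : f (insert x {q, u}) - f {q, u} ≤ f (insert x {q}) - f {q} := by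
      apply hsub {q} {q, u} ?_ ?_ x hxV ?_
      · intro a ha; simp only [mem_singleton] at ha; simp [ha]
      · intro a ha
        simp only [mem_insert, mem_singleton] at ha
        rcases ha with rfl | rfl
        · exact hqV
        · exact huV
      · simp only [mem_insert, mem_singleton, not_or]
        exact ⟨hxq, hxu⟩
    have e2 : insert q ({u, x} : Finset α) = insert x {q, u} := by
      ext a; simp only [mem_insert, mem_singleton]; tauto
    have e4 : ({u, x} : Finset α) = insert x {u} := Finset.pair_comm u x
    have e1 : ({u, q} : Finset α) = {q, u} := Finset.pair_comm u q
    have hle : w f V u x ≤ 2 * w f V q x := by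
      simp only [w, gain] at h2 hgain ⊢
      rw [e2, e4] at h2
      rw [e1] at h1
      have e3 : ({x, q} : Finset α) = insert x {q} := rfl
      rw [e3] at h1
      linarith
    have h4 : U.inf' hU (fun u => w f V u x) ≤ w f V u x :=
      Finset.inf'_le _ huU
    rw [hq] at hlt
    linarith
  refine ⟨hmain, ?_⟩
  calc ((V \ (Vstar ∪ U)).filter
        (fun x => 2 * Vstar.inf' hVstar (fun y => w f V y x) <
          U.inf' hU (fun u => w f V u x))).card
      ≤ (Vstar.biUnion B).card := Finset.card_le_card hmain
    _ ≤ ∑ q ∈ Vstar, (B q).card := Finset.card_biUnion_le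
    _ ≤ ∑ _q ∈ Vstar, m := Finset.sum_le_sum (fun q hq => (hB q hq).2.1)
    _ = Vstar.card * m := by rw [Finset.sum_const, smul_eq_mul]
end
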